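/- Every non-empty bispecial factor of a complementary symmetric Rote sequence v is ordinary (has bilateral order 0), and the empty word is a strong bispecial factor of v (has bilateral order 1). -/

import Mathlib

/-- Words over the binary alphabet `{0,1}`, represented as `ZMod 2`. -/
abbrev Word := List (ZMod 2)

/-- The difference map `S`. -/
def Sdiff (v : Word) : Word := List.zipWith (· + ·) v v.tail

/-- The letter-exchange morphism `E`. -/
def Ex (v : Word) : Word := v.map (· + 1)

/-- `m` is an occurrence of the word `w` in the sequence `s`. -/
def OccAt (s : ℕ → ZMod 2) (w : Word) (m : ℕ) : Prop :=
  w = List.ofFn fun i : Fin w.length => s (m + i)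

/-- `w` is a factor of the sequence `s`. -/
def IsFactor (s : ℕ → ZMod 2) (w : Word) : Prop := ∃ m, OccAt s w m

/-- `w` is a left special factor of `s`. -/
def LeftSpecial (s : ℕ → ZMod 2) (w : Word) : Prop :=
  IsFactor s ((0 : ZMod 2) :: w) ∧ IsFactor s ((1 : ZMod 2) :: w)

/-- `w` is a right special factor of `s`. -/
def RightSpecial (s : ℕ → ZMod 2) (w : Word) : Prop :=
  IsFactor s (w ++ [(0 : ZMod 2)]) ∧ IsFactor s (w ++ [(1 : ZMod 2)])

/-- `w` is a bispecial factor of `s`. -/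
def Bispecial (s : ℕ → ZMod 2) (w : Word) : Prop :=
  LeftSpecial s w ∧ RightSpecial s w

/-- Factor complexity of a sequence. -/
noncomputable def Cplx (s : ℕ → ZMod 2) (n : ℕ) : ℕ :=
  {w : Word | w.length = n ∧ IsFactor s w}.ncard

/-- `v` is a complementary symmetric Rote sequence. -/
def IsCSRote (v : ℕ → ZMod 2) : Prop :=
  (∀ n, 1 ≤ n → Cplx v n = 2 * n) ∧
  (∀ w : Word, IsFactor v w → IsFactor v (Ex w))

/-- The bilateral order `B(w)` of a factor `w` of `s`:
`B(w) = #{(a,b) : awb ∈ L(s)} − #{a : aw ∈ L(s)} − #{b : wb ∈ L(s)} + 1`. -/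
noncomputable def BilateralOrder (s : ℕ → ZMod 2) (w : Word) : ℤ :=
  ({p : ZMod 2 × ZMod 2 | IsFactor s (p.1 :: (w ++ [p.2]))}.ncard : ℤ)
    - ({a : ZMod 2 | IsFactor s (a :: w)}.ncard : ℤ)
    - ({b : ZMod 2 | IsFactor s (w ++ [b])}.ncard : ℤ) + 1

/-!
Every factor has one or two right extensions, so complexity `2n` means exactly two right
special factors of each length `n ≥ 1`; when `w ≠ ε` is right special they are `w` and `E w`.
For a bispecial `w` the definition unwinds to `B(w) = #{a | a w is right special} - 1`.
A right special factor of length `|w| + 1` has a right special suffix, `w` or `E w`, and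
applying `E` if needed shows that some `a w` is right special. Both `0 w` and `1 w` cannot be,
since together with `E (0 w) = 1 (E w)` they would give three right special factors of length
`|w| + 1`. Hence `B(w) = 0`. For `ε`, complexity `4 = 2²` in length two makes every word of
length two a factor, so both letters extend to right special factors and `B(ε) = 1`.
-/

open Finset

theorem occAt_cons {s : ℕ → ZMod 2} {a : ZMod 2} {w : Word} {m : ℕ} :
    OccAt s (a :: w) m ↔ a = s m ∧ OccAt s w (m + 1) := by
  simp only [OccAt, List.length_cons, List.ofFn_succ, List.cons.injEq, Fin.val_zero, add_zero,
    Fin.val_succ]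
  simp only [add_assoc, add_comm 1]

theorem occAt_append_singleton {s : ℕ → ZMod 2} {w : Word} {b : ZMod 2} {m : ℕ} :
    OccAt s (w ++ [b]) m ↔ OccAt s w m ∧ b = s (m + w.length) := by
  simp only [OccAt, List.length_append, List.length_singleton, List.ofFn_succ',
    List.concat_eq_append, List.append_singleton_inj]
  simp

section Factors

variable {s : ℕ → ZMod 2} {w : Word}

theorem IsFactor.of_cons {a : ZMod 2} (h : IsFactor s (a :: w)) : IsFactor s w :=
  let ⟨m, hm⟩ := h
  ⟨m + 1, (occAt_cons.1 hm).2⟩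

theorem IsFactor.of_append_singleton {b : ZMod 2} (h : IsFactor s (w ++ [b])) : IsFactor s w :=
  let ⟨m, hm⟩ := h
  ⟨m, (occAt_append_singleton.1 hm).1⟩

theorem IsFactor.exists_append_singleton (h : IsFactor s w) : ∃ b, IsFactor s (w ++ [b]) :=
  let ⟨m, hm⟩ := h
  ⟨s (m + w.length), m, occAt_append_singleton.2 ⟨hm, rfl⟩⟩

theorem LeftSpecial.isFactor_cons (h : LeftSpecial s w) (a : ZMod 2) : IsFactor s (a :: w) := by
  fin_cases a
  exacts [h.1, h.2]

theorem RightSpecial.isFactor_append (h : RightSpecial s w) (b : ZMod 2) :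
    IsFactor s (w ++ [b]) := by
  fin_cases b
  exacts [h.1, h.2]

theorem RightSpecial.of_cons {a : ZMod 2} (h : RightSpecial s (a :: w)) : RightSpecial s w :=
  ⟨h.1.of_cons, h.2.of_cons⟩

theorem RightSpecial.isFactor (h : RightSpecial s w) : IsFactor s w :=
  h.1.of_append_singleton

end Factors

section Exchange

@[simp]
theorem ex_cons (a : ZMod 2) (w : Word) : Ex (a :: w) = (a + 1) :: Ex w := rfl

theorem ex_append (u w : Word) : Ex (u ++ w) = Ex u ++ Ex w := List.map_append

@[simp]
theorem length_ex (w : Word) : (Ex w).length = w.length := List.length_map _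

@[simp]
theorem ex_ex (w : Word) : Ex (Ex w) = w := by
  have h : ∀ x : ZMod 2, x + 1 + 1 = x := by decide
  simp [Ex, Function.comp_def, h]

theorem ex_ne_self {w : Word} (hw : w ≠ []) : Ex w ≠ w := by
  obtain ⟨a, t, rfl⟩ := List.exists_cons_of_ne_nil hw
  have h : ∀ x : ZMod 2, x + 1 ≠ x := by decide
  simp [h]

theorem RightSpecial.ex {s : ℕ → ZMod 2} {w : Word}
    (hE : ∀ u : Word, IsFactor s u → IsFactor s (Ex u)) (h : RightSpecial s w) :
    RightSpecial s (Ex w) := by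
  have h0 := hE _ h.2
  have h1 := hE _ h.1
  rw [ex_append] at h0 h1
  exact ⟨h0, h1⟩

end Exchange

section Counting

variable {s : ℕ → ZMod 2} {w : Word} {n : ℕ}

open Classical in
noncomputable def rightExts (s : ℕ → ZMod 2) (w : Word) : Finset (ZMod 2) :=
  {b | IsFactor s (w ++ [b])}

theorem mem_rightExts {b : ZMod 2} : b ∈ rightExts s w ↔ IsFactor s (w ++ [b]) := by
  classical simp [rightExts]

theorem rightSpecial_iff_rightExts_eq_univ : RightSpecial s w ↔ rightExts s w = univ := by
  simp only [eq_univ_iff_forall, mem_rightExts]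
  exact ⟨RightSpecial.isFactor_append, fun h => ⟨h 0, h 1⟩⟩

open Classical in
theorem card_rightExts (h : IsFactor s w) :
    #(rightExts s w) = if RightSpecial s w then 2 else 1 := by
  split_ifs with hrs
  · rw [rightSpecial_iff_rightExts_eq_univ.1 hrs]
    norm_num
  · obtain ⟨b, hb⟩ := h.exists_append_singleton
    have hpos : 0 < #(rightExts s w) := card_pos.2 ⟨b, mem_rightExts.2 hb⟩
    have hlt : #(rightExts s w) < 2 := by
      by_contra! hge
      exact hrs (rightSpecial_iff_rightExts_eq_univ.2
        (eq_univ_of_card _ (hge.antisymm' (card_le_univ _))))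
    omega

noncomputable def wordsOfLength (n : ℕ) : Finset Word :=
  univ.image (List.ofFn : (Fin n → ZMod 2) → Word)

theorem mem_wordsOfLength : w ∈ wordsOfLength n ↔ w.length = n := by
  simp only [wordsOfLength, mem_image, mem_univ, true_and]
  refine ⟨?_, ?_⟩
  · rintro ⟨f, rfl⟩
    exact List.length_ofFn
  · rintro rfl
    exact ⟨w.get, List.ofFn_get w⟩

theorem card_wordsOfLength : #(wordsOfLength n) = 2 ^ n := by
  rw [wordsOfLength, card_image_of_injective _ List.ofFn_injective, card_univ,
    Fintype.card_fun, ZMod.card, Fintype.card_fin]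

open Classical in
noncomputable def factorsOfLength (s : ℕ → ZMod 2) (n : ℕ) : Finset Word :=
  {w ∈ wordsOfLength n | IsFactor s w}

theorem mem_factorsOfLength : w ∈ factorsOfLength s n ↔ w.length = n ∧ IsFactor s w := by
  classical simp [factorsOfLength, mem_wordsOfLength]

theorem cplx_eq_card_factorsOfLength : Cplx s n = #(factorsOfLength s n) := by
  rw [Cplx, ← Set.ncard_coe_finset]
  congr 1
  ext w
  simp [mem_factorsOfLength]

theorem isFactor_of_cplx_eq_pow (h : Cplx s n = 2 ^ n) (hw : w.length = n) : IsFactor s w := by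
  classical
  rw [cplx_eq_card_factorsOfLength, ← card_wordsOfLength, factorsOfLength,
    card_filter_eq_iff] at h
  exact h w (mem_wordsOfLength.2 hw)

theorem card_factorsOfLength_succ :
    #(factorsOfLength s (n + 1)) = ∑ u ∈ factorsOfLength s n, #(rightExts s u) := by
  rw [card_eq_sum_card_fiberwise (f := List.dropLast) (t := factorsOfLength s n)]
  · refine sum_congr rfl fun u hu => ?_
    have hfiber : {z ∈ factorsOfLength s (n + 1) | z.dropLast = u} =
        (rightExts s u).image (u ++ [·]) := by
      ext z
      simp only [mem_filter, mem_factorsOfLength, mem_image, mem_rightExts]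
      constructor
      · rintro ⟨⟨hlen, hz⟩, rfl⟩
        rcases z.eq_nil_or_concat' with rfl | ⟨L, b, rfl⟩
        · simp at hlen
        · exact ⟨b, by simpa using hz, by simp⟩
      · rintro ⟨b, hb, rfl⟩
        simp [(mem_factorsOfLength.1 hu).1, hb]
    rw [hfiber, card_image_of_injective _ fun b c h => by simpa using h]
  · intro z hz
    obtain ⟨hlen, hz⟩ := mem_factorsOfLength.1 hz
    rcases z.eq_nil_or_concat' with rfl | ⟨L, b, rfl⟩
    · simp at hlen
    · simpa [mem_factorsOfLength] using ⟨by simpa using hlen, hz.of_append_singleton⟩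

open Classical in
noncomputable def rightSpecials (s : ℕ → ZMod 2) (n : ℕ) : Finset Word :=
  {w ∈ factorsOfLength s n | RightSpecial s w}

theorem mem_rightSpecials : w ∈ rightSpecials s n ↔ w.length = n ∧ RightSpecial s w := by
  classical
  simp only [rightSpecials, mem_filter, mem_factorsOfLength]
  exact ⟨fun h => ⟨h.1.1, h.2⟩, fun h => ⟨⟨h.1, h.2.isFactor⟩, h.2⟩⟩

theorem cplx_succ : Cplx s (n + 1) = Cplx s n + #(rightSpecials s n) := by
  classical
  rw [cplx_eq_card_factorsOfLength, cplx_eq_card_factorsOfLength, card_factorsOfLength_succ,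
    rightSpecials, card_filter, card_eq_sum_ones, ← sum_add_distrib]
  refine sum_congr rfl fun u hu => ?_
  rw [card_rightExts (mem_factorsOfLength.1 hu).2]
  split_ifs <;> rfl

end Counting

section Bilateral

variable {s : ℕ → ZMod 2} {w : Word}

theorem ncard_extensions_eq_sum :
    {p : ZMod 2 × ZMod 2 | IsFactor s (p.1 :: (w ++ [p.2]))}.ncard =
      ∑ a, #(rightExts s (a :: w)) := by
  classical
  rw [← coe_filter_univ, Set.ncard_coe_finset, card_filter, Fintype.sum_prod_type]
  refine sum_congr rfl fun a _ => ?_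
  rw [rightExts, card_filter]
  rfl

theorem Bispecial.bilateralOrder_eq (h : Bispecial s w) :
    BilateralOrder s w = {a | RightSpecial s (a :: w)}.ncard - 1 := by
  classical
  have hleft : {a : ZMod 2 | IsFactor s (a :: w)} = Set.univ :=
    Set.eq_univ_of_forall h.1.isFactor_cons
  have hright : {b : ZMod 2 | IsFactor s (w ++ [b])} = Set.univ :=
    Set.eq_univ_of_forall h.2.isFactor_append
  have hpairs : ∑ a, #(rightExts s (a :: w)) = {a | RightSpecial s (a :: w)}.ncard + 2 := by
    have hcard : ∀ a, #(rightExts s (a :: w)) = (if RightSpecial s (a :: w) then 1 else 0) + 1 :=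
      fun a => by rw [card_rightExts (h.1.isFactor_cons a)]; split_ifs <;> rfl
    rw [sum_congr rfl fun a _ => hcard a, sum_add_distrib, ← coe_filter_univ,
      Set.ncard_coe_finset, card_filter]
    norm_num
  rw [BilateralOrder, ncard_extensions_eq_sum, hpairs, hleft, hright, Set.ncard_univ,
    Nat.card_zmod]
  push_cast
  ring

end Bilateral

namespace IsCSRote

variable {v : ℕ → ZMod 2} (hv : IsCSRote v) {w : Word}
include hv

theorem isFactor_of_length_eq_two (hw : w.length = 2) : IsFactor v w :=
  isFactor_of_cplx_eq_pow (hv.1 2 (by norm_num)) hw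

theorem card_rightSpecials {n : ℕ} (hn : 1 ≤ n) : #(rightSpecials v n) = 2 := by
  have h := cplx_succ (s := v) (n := n)
  rw [hv.1 n hn, hv.1 (n + 1) (by omega)] at h
  omega

theorem rightSpecials_eq_pair (hw : w ≠ []) (h : RightSpecial v w) :
    rightSpecials v w.length = {w, Ex w} := by
  have hn : 1 ≤ w.length := List.length_pos_iff.2 hw
  refine (eq_of_subset_of_card_le ?_ ?_).symm
  · simp only [insert_subset_iff, singleton_subset_iff, mem_rightSpecials, length_ex, true_and]
    exact ⟨h, h.ex hv.2⟩
  · rw [hv.card_rightSpecials hn, card_pair (ex_ne_self hw).symm]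

theorem exists_rightSpecial_cons (hw : w ≠ []) (h : RightSpecial v w) :
    ∃ a, RightSpecial v (a :: w) := by
  have hcard : #(rightSpecials v (w.length + 1)) = 2 := hv.card_rightSpecials (by omega)
  obtain ⟨z, hzmem⟩ := card_pos.1 (by omega : 0 < #(rightSpecials v (w.length + 1)))
  obtain ⟨hlen, hz⟩ := mem_rightSpecials.1 hzmem
  obtain ⟨a, u, rfl⟩ := List.exists_cons_of_length_eq_add_one hlen
  have hu : u ∈ rightSpecials v w.length :=
    mem_rightSpecials.2 ⟨by simpa using hlen, hz.of_cons⟩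
  rw [hv.rightSpecials_eq_pair hw h, mem_insert, mem_singleton] at hu
  rcases hu with rfl | rfl
  · exact ⟨a, hz⟩
  · exact ⟨a + 1, by simpa using hz.ex hv.2⟩

theorem eq_of_rightSpecial_cons (hw : w ≠ []) {a b : ZMod 2} (ha : RightSpecial v (a :: w))
    (hb : RightSpecial v (b :: w)) : a = b := by
  by_contra hab
  have hbin : ∀ a b : ZMod 2, a ≠ b → b = a + 1 := by decide
  obtain rfl := hbin a b hab
  have hsub : {a :: w, (a + 1) :: w, (a + 1) :: Ex w} ⊆ rightSpecials v (w.length + 1) := by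
    simp only [insert_subset_iff, singleton_subset_iff, mem_rightSpecials, List.length_cons,
      length_ex, true_and]
    exact ⟨ha, hb, by simpa using ha.ex hv.2⟩
  have hcard := card_le_card hsub
  rw [hv.card_rightSpecials (by omega), card_insert_of_notMem, card_pair] at hcard
  · omega
  · simpa using (ex_ne_self hw).symm
  · simp [hab]

end IsCSRote

/-- every non-empty bispecial factor of a complementary symmetric Rote
sequence `v` is ordinary (`B(w) = 0`), and the empty word is a strong bispecial factor
of `v` with `B(ε) = 1`. -/
theorem rote_bispecial_ordinary (v : ℕ → ZMod 2) (hrote : IsCSRote v) :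
    (∀ w : Word, w ≠ [] → Bispecial v w → BilateralOrder v w = 0) ∧
    (Bispecial v [] ∧ BilateralOrder v [] = 1) := by
  have hpair (a b : ZMod 2) : IsFactor v [a, b] := hrote.isFactor_of_length_eq_two rfl
  have hnil : Bispecial v [] :=
    ⟨⟨(hpair 0 0).of_cons, (hpair 0 1).of_cons⟩, (hpair 0 0).of_cons, (hpair 0 1).of_cons⟩
  refine ⟨fun w hw hbis => ?_, hnil, ?_⟩
  · obtain ⟨a, ha⟩ := hrote.exists_rightSpecial_cons hw hbis.2
    have hunique : {b | RightSpecial v (b :: w)} = {a} :=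
      Set.eq_singleton_iff_unique_mem.2 ⟨ha, fun b hb => hrote.eq_of_rightSpecial_cons hw hb ha⟩
    rw [hbis.bilateralOrder_eq, hunique, Set.ncard_singleton]
    norm_num
  · have hall : {a | RightSpecial v [a]} = Set.univ :=
      Set.eq_univ_of_forall fun a => ⟨hpair a 0, hpair a 1⟩
    rw [hnil.bilateralOrder_eq, hall, Set.ncard_univ, Nat.card_zmod]
    norm_num
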